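/- Let F be an infinite field and let n be a positive integer. Then the center of the special upper triangular group STP(n,F) coincides with the center of the special linear group SL(n,F) (i.e., it consists exactly of the scalar matrices λ·I_n with λ^n = 1), and moreover the quotient group STP(n,F)/Z(STP(n,F)) has trivial center. -/

import Mathlib

noncomputable section

open Matrix

/-- The special upper triangular group `STP(n, F)`: the subgroup of the special linear
group `SL(n, F)` consisting of upper triangular matrices. -/
def STP (n : ℕ) (F : Type*) [Field F] : Subgroup (Matrix.SpecialLinearGroup (Fin n) F) where
  carrier := { A | (A : Matrix (Fin n) (Fin n) F).BlockTriangular id }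
  one_mem' := by
    simpa only [Set.mem_setOf_eq, Matrix.SpecialLinearGroup.coe_one] using
      Matrix.blockTriangular_one
  mul_mem' := by
    intro a b ha hb
    simpa only [Set.mem_setOf_eq, Matrix.SpecialLinearGroup.coe_mul] using ha.mul hb
  inv_mem' := by
    intro a ha
    simp only [Set.mem_setOf_eq] at ha ⊢
    have hdet : IsUnit (a : Matrix (Fin n) (Fin n) F).det := by
      rw [a.prop]; exact isUnit_one
    haveI := Matrix.invertibleOfIsUnitDet _ hdet
    have h1 : (↑(a⁻¹) : Matrix (Fin n) (Fin n) F) = (↑a : Matrix (Fin n) (Fin n) F)⁻¹ := by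
      rw [Matrix.SpecialLinearGroup.coe_inv, Matrix.inv_def, a.prop, Ring.inverse_one, one_smul]
    rw [h1]
    exact Matrix.blockTriangular_inv_of_blockTriangular ha

/-- The product (pointwise) topology on `n × n` matrices over a topological field. -/
def matrixTop (n : ℕ) (F : Type*) (t : TopologicalSpace F) :
    TopologicalSpace (Matrix (Fin n) (Fin n) F) :=
  @Pi.topologicalSpace _ _ fun _ => @Pi.topologicalSpace _ _ fun _ => t

/-- The pointwise topology on `SL(n, F)`, induced from `F ^ (n²)`. -/
def SLtop (n : ℕ) (F : Type*) [Field F] (t : TopologicalSpace F) :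
    TopologicalSpace (Matrix.SpecialLinearGroup (Fin n) F) :=
  (matrixTop n F t).induced ((↑) : Matrix.SpecialLinearGroup (Fin n) F → Matrix (Fin n) (Fin n) F)

/-- The subspace topology on `STP(n, F) ⊆ SL(n, F)`. -/
def STPtop (n : ℕ) (F : Type*) [Field F] (t : TopologicalSpace F) :
    TopologicalSpace (STP n F) :=
  (SLtop n F t).induced ((↑) : STP n F → Matrix.SpecialLinearGroup (Fin n) F)

/-- A Hausdorff topological group `(G, t)` is (topologically) minimal if `G` admits no
strictly coarser Hausdorff group topology. -/
def IsMinimalTopGroup (G : Type*) [Group G] (t : TopologicalSpace G) : Prop :=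
  @IsTopologicalGroup G t _ ∧ @T2Space G t ∧
    ∀ t' : TopologicalSpace G, t ≤ t' → @IsTopologicalGroup G t' _ → @T2Space G t' → t' = t

/-- A Hausdorff topological group `(G, t)` is totally minimal if every continuous surjective
group homomorphism onto a Hausdorff topological group is open. -/
def IsTotallyMinimalTopGroup (G : Type*) [Group G] (t : TopologicalSpace G) : Prop :=
  @IsTopologicalGroup G t _ ∧ @T2Space G t ∧
    ∀ (H : Type*) (_ : Group H) (tH : TopologicalSpace H),
      @IsTopologicalGroup H tH _ → @T2Space H tH → ∀ f : G →* H,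
        @Continuous _ _ t tH f → Function.Surjective f → @IsOpenMap _ _ t tH f

/-- A minimal topological group `(G, t)` is perfectly minimal if its product with any
minimal topological group is minimal. -/
def IsPerfectlyMinimalTopGroup (G : Type*) [Group G] (t : TopologicalSpace G) : Prop :=
  IsMinimalTopGroup G t ∧
    ∀ (H : Type*) (_ : Group H) (tH : TopologicalSpace H), IsMinimalTopGroup H tH →
      IsMinimalTopGroup (G × H) (@instTopologicalSpaceProd _ _ t tH)

/-- The Gaussian rational field `ℚ(i)`: the subfield of `ℂ` generated by `i`. -/
def QI : Subfield ℂ := Subfield.closure {Complex.I}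

/-- `ρ m = e^{2πi/m}`, a primitive `m`-th root of unity in `ℂ`. -/
def rho (m : ℕ) : ℂ := Complex.exp (2 * Real.pi * Complex.I / m)

/-- The `p`-adic topology on `ℚ`: the topology induced from `ℚ_p`. -/
def padicTopology (p : ℕ) (hp : p.Prime) : TopologicalSpace ℚ :=
  haveI : Fact p.Prime := ⟨hp⟩
  TopologicalSpace.induced ((↑) : ℚ → ℚ_[p]) inferInstance


/-!
A central element `A` of `STP(n, F)` commutes with every diagonal matrix of determinant one;
as `F` has an element `d` with `d² ≠ 1`, the diagonal matrices `diag(…, d, …, d⁻¹, …)` separate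
any two coordinates, which forces `A` to be diagonal. Commuting with the upper transvections
`1 + E_ij` (`i < j`) then makes all diagonal entries equal, so `A` is scalar and hence central
in `SL(n, F)`.

For the quotient: if `A` is central modulo `Z(STP(n, F))`, every commutator `⁅A, B⁆` is a
scalar matrix. The diagonal of an upper triangular matrix is multiplicative, so the diagonal
entries of a commutator are commutators in `F`, i.e. equal to one; the scalar is therefore `1`.
-/

open Subgroup
open scoped commutatorElement

theorem MonoidHom.map_commutatorElement_eq_one {G M : Type*} [Group G] [CommMonoid M]
    (f : G →* M) (a b : G) : f ⁅a, b⁆ = 1 := by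
  calc f ⁅a, b⁆ = f (a * a⁻¹) * f (b * b⁻¹) := by
        simp only [commutatorElement_def, map_mul]; ac_rfl
    _ = 1 := by simp

theorem Subgroup.center_quotient_center_eq_bot {G : Type*} [Group G]
    (h : ∀ a b : G, ⁅a, b⁆ ∈ center G → ⁅a, b⁆ = 1) : center (G ⧸ center G) = ⊥ := by
  refine eq_bot_iff.mpr fun x hx => ?_
  obtain ⟨a, rfl⟩ := QuotientGroup.mk_surjective x
  rw [mem_bot, QuotientGroup.eq_one_iff, mem_center_iff]
  intro b
  have hab : ⁅a, b⁆ ∈ center G := by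
    rw [← QuotientGroup.eq_one_iff, ← QuotientGroup.mk'_apply,
      map_commutatorElement, commutatorElement_eq_one_iff_mul_comm]
    exact (mem_center_iff.mp hx _).symm
  exact (commutatorElement_eq_one_iff_mul_comm.mp (h a b hab)).symm

theorem exists_ne_zero_sq_ne_one (F : Type*) [Field F] [Infinite F] :
    ∃ d : F, d ≠ 0 ∧ d ^ 2 ≠ 1 := by
  classical
  obtain ⟨d, hd⟩ := Infinite.exists_notMem_finset ({0, 1, -1} : Finset F)
  simp only [Finset.mem_insert, Finset.mem_singleton, not_or] at hd
  exact ⟨d, hd.1, by rw [sq, Ne, mul_self_eq_one_iff]; tauto⟩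

namespace Matrix

theorem BlockTriangular.mul_apply_self {m R : Type*} [Fintype m] [LinearOrder m]
    [NonUnitalNonAssocSemiring R] {M N : Matrix m m R} (hM : M.BlockTriangular id)
    (hN : N.BlockTriangular id) (i : m) : (M * N) i i = M i i * N i i := by
  rw [mul_apply, Finset.sum_eq_single_of_mem i (Finset.mem_univ i)]
  intro k _ hk
  rcases hk.lt_or_gt with h | h
  · rw [hM h, zero_mul]
  · rw [hN h, mul_zero]

variable {n R : Type*} [Fintype n] [DecidableEq n]

theorem apply_eq_zero_of_commute_diagonal [CommRing R] [NoZeroDivisors R] {f : n → R}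
    {M : Matrix n n R} (hM : Commute (diagonal f) M) {k l : n} (hkl : f k ≠ f l) :
    M k l = 0 := by
  have h := congr_fun₂ hM k l
  simp only [diagonal_mul, mul_diagonal] at h
  exact (mul_eq_zero.mp (by linear_combination h : (f k - f l) * M k l = 0)).resolve_left
    (sub_ne_zero.mpr hkl)

theorem mem_range_scalar_of_isDiag [Semiring R] {M : Matrix n n R} (hM : M.IsDiag)
    (hdiag : ∀ i j, M i i = M j j) : M ∈ Set.range (scalar n) := by
  rcases isEmpty_or_nonempty n with _ | ⟨⟨i⟩⟩
  · exact ⟨0, Subsingleton.elim _ _⟩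
  refine ⟨M i i, ?_⟩
  rw [scalar_apply]
  conv_rhs => rw [← (isDiag_iff_diagonal_diag M).mp hM]
  exact congrArg diagonal (funext fun j => hdiag i j)

theorem SpecialLinearGroup.mem_center_of_coe_mem_range_scalar [CommRing R]
    {A : SpecialLinearGroup n R} (hA : (A : Matrix n n R) ∈ Set.range (scalar n)) :
    A ∈ center (SpecialLinearGroup n R) := by
  obtain ⟨r, hr⟩ := hA
  refine SpecialLinearGroup.mem_center_iff.mpr ⟨r, ?_, hr⟩
  simpa [← hr] using A.prop

end Matrix

namespace STP

variable {n : ℕ} {F : Type*} [Field F]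

def diagonal (f : Fin n → F) (hf : ∏ i, f i = 1) : STP n F :=
  ⟨⟨Matrix.diagonal f, by rwa [det_diagonal]⟩, blockTriangular_diagonal f⟩

def transvection {i j : Fin n} (hij : i < j) (c : F) : STP n F :=
  ⟨⟨Matrix.transvection i j c, det_transvection_of_ne i j hij.ne c⟩,
    blockTriangular_transvection hij.le c⟩

@[simps]
def diagEntry (i : Fin n) : STP n F →* F where
  toFun A := (A : Matrix (Fin n) (Fin n) F) i i
  map_one' := one_apply_eq i
  map_mul' A B := BlockTriangular.mul_apply_self A.2 B.2 i

theorem commute_coe_of_mem_center {A : STP n F} (hA : A ∈ center (STP n F)) (B : STP n F) :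
    Commute (B : Matrix (Fin n) (Fin n) F) A :=
  congrArg (fun C : STP n F => (C : Matrix (Fin n) (Fin n) F)) (mem_center_iff.mp hA B)

theorem isDiag_of_mem_center {d : F} (hd0 : d ≠ 0) (hd : d ^ 2 ≠ 1) {A : STP n F}
    (hA : A ∈ center (STP n F)) : (A : Matrix (Fin n) (Fin n) F).IsDiag := by
  intro k l hkl
  let f : Fin n → F := Pi.mulSingle k d * Pi.mulSingle l d⁻¹
  have hf : ∏ i, f i = 1 := by
    simp [f, Finset.prod_mul_distrib, hd0]
  refine apply_eq_zero_of_commute_diagonal (commute_coe_of_mem_center hA (diagonal f hf)) ?_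
  have hfk : f k = d := by simp [f, hkl]
  have hfl : f l = d⁻¹ := by simp [f, hkl]
  rw [hfk, hfl]
  refine fun h => hd ?_
  rw [sq]
  nth_rw 2 [h]
  exact mul_inv_cancel₀ hd0

theorem diag_eq_of_mem_center {A : STP n F} (hA : A ∈ center (STP n F)) {i j : Fin n}
    (hij : i < j) : (A : Matrix (Fin n) (Fin n) F) i i = (A : Matrix (Fin n) (Fin n) F) j j := by
  have h := (commute_coe_of_mem_center hA (transvection hij 1)).sub_left (Commute.one_left _)
  exact diag_eq_of_commute_single (by simpa [transvection, Matrix.transvection] using h)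

theorem mem_range_scalar_of_mem_center {d : F} (hd0 : d ≠ 0) (hd : d ^ 2 ≠ 1) {A : STP n F}
    (hA : A ∈ center (STP n F)) : (A : Matrix (Fin n) (Fin n) F) ∈ Set.range (scalar (Fin n)) :=
  mem_range_scalar_of_isDiag (isDiag_of_mem_center hd0 hd hA) fun i j => by
    rcases lt_trichotomy i j with h | rfl | h
    · exact diag_eq_of_mem_center hA h
    · rfl
    · exact (diag_eq_of_mem_center hA h).symm

theorem mem_center_iff_coe_mem_center {d : F} (hd0 : d ≠ 0) (hd : d ^ 2 ≠ 1) {A : STP n F} :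
    A ∈ center (STP n F) ↔
      (A : SpecialLinearGroup (Fin n) F) ∈ center (SpecialLinearGroup (Fin n) F) :=
  ⟨fun hA => SpecialLinearGroup.mem_center_of_coe_mem_range_scalar
      (mem_range_scalar_of_mem_center hd0 hd hA),
    fun hA => mem_center_iff.mpr fun B => Subtype.ext (mem_center_iff.mp hA B)⟩

theorem commutatorElement_eq_one_of_mem_center {d : F} (hd0 : d ≠ 0) (hd : d ^ 2 ≠ 1)
    {A B : STP n F} (h : ⁅A, B⁆ ∈ center (STP n F)) : ⁅A, B⁆ = 1 := by
  obtain ⟨r, hr⟩ := mem_range_scalar_of_mem_center hd0 hd h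
  have hr1 (i : Fin n) : r = 1 := by
    have := (diagEntry i).map_commutatorElement_eq_one A B
    rwa [diagEntry_apply, ← hr, scalar_apply, diagonal_apply_eq] at this
  refine Subtype.ext (Subtype.ext ?_)
  ext i j
  rw [← hr, hr1 i, map_one]
  rfl

end STP

theorem stmt_0_general (F : Type*) [Field F] [Infinite F] (n : ℕ) :
    (∀ A : STP n F, A ∈ Subgroup.center ↥(STP n F) ↔
        (A : Matrix.SpecialLinearGroup (Fin n) F) ∈
          Subgroup.center (Matrix.SpecialLinearGroup (Fin n) F)) ∧
    (∀ A : STP n F, A ∈ Subgroup.center ↥(STP n F) ↔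
        ∃ lam : F, lam ^ n = 1 ∧
          ((A : Matrix.SpecialLinearGroup (Fin n) F) : Matrix (Fin n) (Fin n) F) =
            lam • (1 : Matrix (Fin n) (Fin n) F)) ∧
    Subgroup.center (↥(STP n F) ⧸ Subgroup.center ↥(STP n F)) = ⊥ := by
  obtain ⟨d, hd0, hd⟩ := exists_ne_zero_sq_ne_one F
  have hcenter (A : STP n F) := STP.mem_center_iff_coe_mem_center hd0 hd (A := A)
  refine ⟨hcenter, fun A => ?_, center_quotient_center_eq_bot fun A B =>
    STP.commutatorElement_eq_one_of_mem_center hd0 hd⟩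
  rw [hcenter, Matrix.SpecialLinearGroup.mem_center_iff, Fintype.card_fin]
  simp only [scalar_apply, ← smul_one_eq_diagonal, eq_comm]

theorem stmt_0 (F : Type*) [Field F] [Infinite F] (n : ℕ) (hn : 0 < n) :
    (∀ A : STP n F, A ∈ Subgroup.center ↥(STP n F) ↔
        (A : Matrix.SpecialLinearGroup (Fin n) F) ∈
          Subgroup.center (Matrix.SpecialLinearGroup (Fin n) F)) ∧
    (∀ A : STP n F, A ∈ Subgroup.center ↥(STP n F) ↔
        ∃ lam : F, lam ^ n = 1 ∧
          ((A : Matrix.SpecialLinearGroup (Fin n) F) : Matrix (Fin n) (Fin n) F) =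
            lam • (1 : Matrix (Fin n) (Fin n) F)) ∧
    Subgroup.center (↥(STP n F) ⧸ Subgroup.center ↥(STP n F)) = ⊥ :=
  stmt_0_general F n
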